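/- arXiv:1911.04419 — 3 statements merged into one kernel-verified Lean document; each statement's English description precedes it below -/
import Mathlib

section
/- If T and S are A-bounded operators on H with TS = ST, then r_A(T + S) ≤ r_A(T) + r_A(S). -/
open Filter

variable {H : Type*} [NormedAddCommGroup H] [InnerProductSpace ℂ H] [CompleteSpace H]

/-- The seminorm induced by a positive operator `A`: `‖x‖_A = ⟨Ax,x⟩^{1/2}`. -/
noncomputable def anorm (A : H →L[ℂ] H) (x : H) : ℝ :=
  Real.sqrt ((inner ℂ (A x) x : ℂ).re)

/-- `T` is `A`-bounded: there is `c > 0` with `‖Tx‖_A ≤ c‖x‖_A` for all `x`. -/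
def ABounded (A T : H →L[ℂ] H) : Prop :=
  ∃ c > 0, ∀ x : H, anorm A (T x) ≤ c * anorm A x

/-- The `A`-operator seminorm `‖T‖_A = sup{‖Tx‖_A : ‖x‖_A = 1}`. -/
noncomputable def opAnorm (A T : H →L[ℂ] H) : ℝ :=
  sSup {c : ℝ | ∃ x : H, anorm A x = 1 ∧ c = anorm A (T x)}

/-- The `A`-spectral radius `r_A(T) = inf_{n ≥ 1} ‖Tⁿ‖_A^{1/n}`. -/
noncomputable def rA (A T : H →L[ℂ] H) : ℝ :=
  ⨅ n : ℕ+, opAnorm A (T ^ (n : ℕ)) ^ (((n : ℕ) : ℝ)⁻¹)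

/-- The `A`-numerical radius `ω_A(T) = sup{|⟨Tx,x⟩_A| : ‖x‖_A = 1}`. -/
noncomputable def wA (A T : H →L[ℂ] H) : ℝ :=
  sSup {c : ℝ | ∃ x : H, anorm A x = 1 ∧ c = ‖(inner ℂ (A (T x)) x : ℂ)‖}

/-!
For positive `A`, `‖x‖_A = ‖A^{1/2} x‖`, so `‖·‖_A` is a seminorm and `‖·‖_A` on `A`-bounded
operators is submultiplicative. Write `aₙ = ‖Tⁿ‖_A`. This sequence is submultiplicative, so once `a_N ≤ b^N` for one `N ≥ 1`
it grows at most like `M bⁿ`; hence `aₙ ≤ M (r_A(T) + ε)ⁿ` for every `ε > 0`. Since `T` and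
`S` commute, the binomial theorem bounds `‖(T + S)ⁿ‖_A` by
`∑ (n choose k) ‖Tᵏ‖_A ‖Sⁿ⁻ᵏ‖_A ≤ M₁ M₂ (r_A(T) + r_A(S) + ε)ⁿ`, and taking `n`-th roots
gives `r_A(T + S) ≤ r_A(T) + r_A(S) + ε`.
-/

set_option linter.unusedSectionVars false

section RealSequences

variable {a : ℕ → ℝ}

theorem exists_le_mul_pow_of_le_pow (ha : ∀ n, 0 ≤ a n)
    (hmul : ∀ m n, a (m + n) ≤ a m * a n) {N : ℕ} (hN : N ≠ 0) {b : ℝ} (hb : 0 < b)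
    (haN : a N ≤ b ^ N) : ∃ M, ∀ k, a k ≤ M * b ^ k := by
  set M := ∑ t ∈ Finset.range N, a t / b ^ t
  have hsmall : ∀ t < N, a t ≤ M * b ^ t := fun t ht => by
    rw [← div_le_iff₀ (by positivity)]
    exact Finset.single_le_sum (f := fun t => a t / b ^ t) (fun t _ => by have := ha t; positivity)
      (Finset.mem_range.mpr ht)
  have hblock : ∀ q t, a (q * N + t) ≤ (b ^ N) ^ q * a t := by
    intro q t
    induction q with
    | zero => simp
    | succ q ih =>
      calc a ((q + 1) * N + t) = a (N + (q * N + t)) := by ring_nf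
        _ ≤ a N * a (q * N + t) := hmul _ _
        _ ≤ b ^ N * ((b ^ N) ^ q * a t) := mul_le_mul haN ih (ha _) (by positivity)
        _ = (b ^ N) ^ (q + 1) * a t := by ring
  refine ⟨M, fun k => ?_⟩
  rw [← Nat.div_add_mod' k N]
  calc a (k / N * N + k % N) ≤ (b ^ N) ^ (k / N) * a (k % N) := hblock _ _
    _ ≤ (b ^ N) ^ (k / N) * (M * b ^ (k % N)) :=
      mul_le_mul_of_nonneg_left (hsmall _ (Nat.mod_lt _ (Nat.pos_of_ne_zero hN))) (by positivity)
    _ = M * b ^ (k / N * N + k % N) := by ring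

theorem exists_le_mul_pow_of_iInf_rpow_lt (ha : ∀ n, 0 ≤ a n)
    (hmul : ∀ m n, a (m + n) ≤ a m * a n) {b : ℝ}
    (hb : ⨅ n : ℕ+, a n ^ ((n : ℕ) : ℝ)⁻¹ < b) : ∃ M, ∀ k, a k ≤ M * b ^ k := by
  obtain ⟨N, hN⟩ := exists_lt_of_ciInf_lt hb
  have hroot : 0 ≤ a N ^ ((N : ℕ) : ℝ)⁻¹ := Real.rpow_nonneg (ha N) _
  refine exists_le_mul_pow_of_le_pow ha hmul N.ne_zero (hroot.trans_lt hN) ?_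
  calc a N = (a N ^ ((N : ℕ) : ℝ)⁻¹) ^ (N : ℕ) := (Real.rpow_inv_natCast_pow (ha N) N.ne_zero).symm
    _ ≤ b ^ (N : ℕ) := pow_le_pow_left₀ hroot hN.le _

theorem iInf_rpow_le_of_le_mul_pow (ha : ∀ n, 0 ≤ a n) {M C : ℝ} (hC : 0 ≤ C)
    (hMC : ∀ n, a n ≤ M * C ^ n) : ⨅ n : ℕ+, a n ^ ((n : ℕ) : ℝ)⁻¹ ≤ C := by
  -- `M' ^ x` is continuous at `x = 0` only for `M' ≠ 0`.
  set M' := max M 1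
  have hM' : 0 < M' := zero_lt_one.trans_le (le_max_right _ _)
  have hroot : ∀ n : ℕ+, ⨅ n : ℕ+, a n ^ ((n : ℕ) : ℝ)⁻¹ ≤ M' ^ ((n : ℕ) : ℝ)⁻¹ * C := by
    intro n
    refine (ciInf_le ⟨0, ?_⟩ n).trans ?_
    · rintro _ ⟨m, rfl⟩
      exact Real.rpow_nonneg (ha m) _
    calc a n ^ ((n : ℕ) : ℝ)⁻¹ ≤ (M' * C ^ (n : ℕ)) ^ ((n : ℕ) : ℝ)⁻¹ :=
          Real.rpow_le_rpow (ha n)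
            ((hMC n).trans (mul_le_mul_of_nonneg_right (le_max_left _ _) (by positivity)))
            (by positivity)
      _ = M' ^ ((n : ℕ) : ℝ)⁻¹ * C := by
          rw [Real.mul_rpow hM'.le (by positivity), Real.pow_rpow_inv_natCast hC n.ne_zero]
  have hlim : Tendsto (fun n : ℕ => M' ^ (n : ℝ)⁻¹ * C) atTop (nhds C) := by
    have := ((Real.continuousAt_const_rpow hM'.ne').tendsto.comp
      tendsto_inv_atTop_nhds_zero_nat).mul_const C
    simpa using this
  exact ge_of_tendsto hlim (eventually_atTop.mpr ⟨1, fun n hn => hroot ⟨n, hn⟩⟩)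

end RealSequences

section ASeminorm

open Finset.HasAntidiagonal

variable {A T S : H →L[ℂ] H}

theorem anorm_eq_norm_sqrt (hA : A.IsPositive) (x : H) : anorm A x = ‖CFC.sqrt A x‖ := by
  have hA' : 0 ≤ A := (ContinuousLinearMap.nonneg_iff_isPositive A).mpr hA
  have hsa : IsSelfAdjoint (CFC.sqrt A) := IsSelfAdjoint.of_nonneg (CFC.sqrt_nonneg A)
  have hinner : (inner ℂ (A x) x : ℂ) = inner ℂ (CFC.sqrt A x) (CFC.sqrt A x) := by
    conv_lhs => rw [← CFC.sqrt_mul_sqrt_self A hA']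
    exact hsa.isSymmetric _ _
  rw [anorm, hinner]
  exact (congrArg Real.sqrt (inner_self_eq_norm_sq (𝕜 := ℂ) _)).trans (Real.sqrt_sq (norm_nonneg (CFC.sqrt A x)))

theorem anorm_nonneg (x : H) : 0 ≤ anorm A x := Real.sqrt_nonneg _

theorem anorm_smul (hA : A.IsPositive) (c : ℂ) (x : H) :
    anorm A (c • x) = ‖c‖ * anorm A x := by
  simp only [anorm_eq_norm_sqrt hA, map_smul, norm_smul]

theorem anorm_nsmul (hA : A.IsPositive) (m : ℕ) (x : H) : anorm A (m • x) = m * anorm A x := by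
  rw [← Nat.cast_smul_eq_nsmul ℂ, anorm_smul hA, Complex.norm_natCast]

theorem anorm_sum_le (hA : A.IsPositive) {ι : Type*} (s : Finset ι) (f : ι → H) :
    anorm A (∑ i ∈ s, f i) ≤ ∑ i ∈ s, anorm A (f i) := by
  simp only [anorm_eq_norm_sqrt hA, map_sum]
  exact norm_sum_le _ _

theorem ABounded.one : ABounded A 1 := ⟨1, one_pos, fun x => by simp⟩

theorem ABounded.mul (hT : ABounded A T) (hS : ABounded A S) : ABounded A (T * S) := by
  obtain ⟨c, hc, hTc⟩ := hT
  obtain ⟨d, hd, hSd⟩ := hS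
  refine ⟨c * d, mul_pos hc hd, fun x => ?_⟩
  calc anorm A (T (S x)) ≤ c * anorm A (S x) := hTc _
    _ ≤ c * (d * anorm A x) := mul_le_mul_of_nonneg_left (hSd x) hc.le
    _ = c * d * anorm A x := (mul_assoc _ _ _).symm

theorem ABounded.pow (hT : ABounded A T) (n : ℕ) : ABounded A (T ^ n) := by
  induction n with
  | zero => exact ABounded.one
  | succ k ih => rw [pow_succ]; exact ih.mul hT

theorem opAnorm_nonneg : 0 ≤ opAnorm A T :=
  Real.sSup_nonneg <| by rintro _ ⟨x, -, rfl⟩; exact anorm_nonneg _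

theorem opAnorm_le {c : ℝ} (hc : 0 ≤ c) (h : ∀ x, anorm A x = 1 → anorm A (T x) ≤ c) :
    opAnorm A T ≤ c :=
  Real.sSup_le (by rintro _ ⟨x, hx, rfl⟩; exact h x hx) hc

theorem le_opAnorm (hT : ABounded A T) {x : H} (hx : anorm A x = 1) :
    anorm A (T x) ≤ opAnorm A T := by
  refine le_csSup ?_ ⟨x, hx, rfl⟩
  obtain ⟨c, -, hTc⟩ := hT
  refine ⟨c, ?_⟩
  rintro _ ⟨y, hy, rfl⟩
  simpa [hy] using hTc y

theorem anorm_apply_le (hA : A.IsPositive) (hT : ABounded A T) (y : H) :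
    anorm A (T y) ≤ opAnorm A T * anorm A y := by
  rcases eq_or_lt_of_le (anorm_nonneg (A := A) y) with hy | hy
  · obtain ⟨c, -, hTc⟩ := hT
    simpa [← hy] using hTc y
  · have hunit : anorm A (((anorm A y)⁻¹ : ℝ) • y) = 1 := by
      rw [← Complex.coe_smul, anorm_smul hA, Complex.norm_real, Real.norm_of_nonneg
        (inv_nonneg.mpr hy.le), inv_mul_cancel₀ hy.ne']
    have := le_opAnorm hT hunit
    rwa [← Complex.coe_smul, map_smul, anorm_smul hA, Complex.norm_real, Real.norm_of_nonneg
      (inv_nonneg.mpr hy.le), inv_mul_le_iff₀ hy, mul_comm] at this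

theorem opAnorm_mul_le (hA : A.IsPositive) (hT : ABounded A T) (hS : ABounded A S) :
    opAnorm A (T * S) ≤ opAnorm A T * opAnorm A S := by
  refine opAnorm_le (mul_nonneg opAnorm_nonneg opAnorm_nonneg) fun x hx => ?_
  calc anorm A (T (S x)) ≤ opAnorm A T * anorm A (S x) := anorm_apply_le hA hT _
    _ ≤ opAnorm A T * opAnorm A S :=
      mul_le_mul_of_nonneg_left (le_opAnorm hS hx) opAnorm_nonneg

theorem opAnorm_add_pow_le (hA : A.IsPositive) (hT : ABounded A T) (hS : ABounded A S)
    (hcomm : Commute T S) (n : ℕ) :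
    opAnorm A ((T + S) ^ n) ≤ ∑ m ∈ antidiagonal n,
      n.choose m.1 * (opAnorm A (T ^ m.1) * opAnorm A (S ^ m.2)) := by
  refine opAnorm_le (Finset.sum_nonneg fun _ _ =>
    mul_nonneg (Nat.cast_nonneg _) (mul_nonneg opAnorm_nonneg opAnorm_nonneg)) fun x hx => ?_
  rw [hcomm.add_pow', sum_apply]
  refine (anorm_sum_le hA _ _).trans (Finset.sum_le_sum fun m _ => ?_)
  rw [smul_apply, anorm_nsmul hA]
  exact mul_le_mul_of_nonneg_left ((le_opAnorm ((hT.pow _).mul (hS.pow _)) hx).trans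
    (opAnorm_mul_le hA (hT.pow _) (hS.pow _))) (Nat.cast_nonneg _)

theorem exists_opAnorm_pow_le (hA : A.IsPositive) (hT : ABounded A T) {b : ℝ}
    (hb : rA A T < b) : ∃ M, ∀ k, opAnorm A (T ^ k) ≤ M * b ^ k :=
  exists_le_mul_pow_of_iInf_rpow_lt (fun _ => opAnorm_nonneg)
    (fun m n => by rw [pow_add]; exact opAnorm_mul_le hA (hT.pow m) (hT.pow n)) hb

theorem opAnorm_add_pow_le_mul_pow (hA : A.IsPositive) (hT : ABounded A T) (hS : ABounded A S)
    (hcomm : Commute T S) {M₁ M₂ b₁ b₂ : ℝ} (h₁ : ∀ k, opAnorm A (T ^ k) ≤ M₁ * b₁ ^ k)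
    (h₂ : ∀ k, opAnorm A (S ^ k) ≤ M₂ * b₂ ^ k) (n : ℕ) :
    opAnorm A ((T + S) ^ n) ≤ M₁ * M₂ * (b₁ + b₂) ^ n := by
  refine (opAnorm_add_pow_le hA hT hS hcomm n).trans ?_
  rw [(Commute.all b₁ b₂).add_pow', Finset.mul_sum]
  refine Finset.sum_le_sum fun m _ => ?_
  rw [nsmul_eq_mul]
  calc (n.choose m.1 : ℝ) * (opAnorm A (T ^ m.1) * opAnorm A (S ^ m.2))
      ≤ n.choose m.1 * ((M₁ * b₁ ^ m.1) * (M₂ * b₂ ^ m.2)) :=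
        mul_le_mul_of_nonneg_left (mul_le_mul (h₁ _) (h₂ _) opAnorm_nonneg
          (opAnorm_nonneg.trans (h₁ _))) (Nat.cast_nonneg _)
    _ = M₁ * M₂ * (n.choose m.1 * (b₁ ^ m.1 * b₂ ^ m.2)) := by ring

end ASeminorm

theorem stmt_2_general (A T S : H →L[ℂ] H) (hA : A.IsPositive)
    (hT : ABounded A T) (hS : ABounded A S) (hcomm : T * S = S * T) :
    rA A (T + S) ≤ rA A T + rA A S := by
  refine le_of_forall_pos_le_add fun ε hε => ?_
  have hrT : 0 ≤ rA A T := Real.iInf_nonneg fun _ => Real.rpow_nonneg opAnorm_nonneg _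
  have hrS : 0 ≤ rA A S := Real.iInf_nonneg fun _ => Real.rpow_nonneg opAnorm_nonneg _
  obtain ⟨M₁, hM₁⟩ := exists_opAnorm_pow_le hA hT (lt_add_of_pos_right (rA A T) (half_pos hε))
  obtain ⟨M₂, hM₂⟩ := exists_opAnorm_pow_le hA hS (lt_add_of_pos_right (rA A S) (half_pos hε))
  calc rA A (T + S) ≤ rA A T + ε / 2 + (rA A S + ε / 2) :=
        iInf_rpow_le_of_le_mul_pow (fun _ => opAnorm_nonneg) (by positivity)
          (opAnorm_add_pow_le_mul_pow hA hT hS hcomm hM₁ hM₂)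
    _ = rA A T + rA A S + ε := by ring

theorem stmt_2 (A T S : H →L[ℂ] H) (hA : A.IsPositive) (hA0 : A ≠ 0)
    (hT : ABounded A T) (hS : ABounded A S) (hcomm : T * S = S * T) :
    rA A (T + S) ≤ rA A T + rA A S :=
  stmt_2_general A T S hA hT hS hcomm
end

section
/- If T is an A-bounded operator with AT² = 0, then ω_A(T) = (1/2)‖T‖_A. -/
open Filter

variable {H : Type*} [NormedAddCommGroup H] [InnerProductSpace ℂ H] [CompleteSpace H]

/-!
Factor `A = S⋆S`, so that `⟨x, y⟩_A = ⟨Sx, Sy⟩`, `‖x‖_A = ‖Sx‖` and `AT² = 0` becomes `STT = 0`.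
For a vector `x`, put `u = Sx` and `v = STx`; then `ST(x + μTx) = v` and `S(x + μTx) = u + μv`.
Testing `‖T‖_A` on `x + μTx` with `u + μv ⟂ v` and using AM–GM gives `|⟨v, u⟩| ≤ ‖T‖_A ‖u‖² / 2`;
testing `ω_A(T)` on `x ± tTx` and using the parallelogram law gives `‖v‖ ≤ 2 ω_A(T) ‖u‖`.
-/

open scoped InnerProductSpace

section InnerProduct

variable {𝕜 E : Type*} [RCLike 𝕜] [SeminormedAddCommGroup E] [InnerProductSpace 𝕜 E]

theorem norm_inner_le_half_mul_sq_of_forall_norm_le {u v : E} {N : ℝ}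
    (h : ∀ μ : 𝕜, ‖v‖ ≤ N * ‖u + μ • v‖) : ‖⟪v, u⟫_𝕜‖ ≤ N / 2 * ‖u‖ ^ 2 := by
  by_cases hv : ‖v‖ = 0
  · have hvu : ‖⟪v, u⟫_𝕜‖ = 0 :=
      le_antisymm ((norm_inner_le_norm v u).trans (by simp [hv])) (norm_nonneg _)
    have hu := h 0
    rw [zero_smul, add_zero] at hu
    rw [hvu]
    nlinarith [norm_nonneg u]
  set c : 𝕜 := ⟪v, u⟫_𝕜 / (‖v‖ : 𝕜) ^ 2
  set w := u + (-c) • v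
  have hvv : ⟪v, v⟫_𝕜 = (‖v‖ : 𝕜) ^ 2 := inner_self_eq_norm_sq_to_K v
  have hvw : ⟪v, w⟫_𝕜 = 0 := by
    have : (‖v‖ : 𝕜) ≠ 0 := by exact_mod_cast hv
    simp only [w, c, inner_add_right, inner_smul_right, hvv]
    field_simp
    ring
  have hu : u = w + c • v := by simp [w]
  have hinner : ‖⟪v, u⟫_𝕜‖ = ‖c‖ * ‖v‖ * ‖v‖ := by
    rw [hu, inner_add_right, hvw, inner_smul_right, hvv, zero_add, norm_mul, norm_pow,
      RCLike.norm_ofReal, abs_norm]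
    ring
  have hpyth : ‖u‖ ^ 2 = ‖w‖ ^ 2 + (‖c‖ * ‖v‖) ^ 2 := by
    rw [hu, sq, norm_add_sq_eq_norm_sq_add_norm_sq_of_inner_eq_zero (𝕜 := 𝕜), norm_smul]
    · ring
    · rw [inner_smul_right, ← inner_conj_symm, hvw, map_zero, mul_zero]
  have hvw_le : ‖v‖ ≤ N * ‖w‖ := h (-c)
  have hN : 0 ≤ N := by
    by_contra! hN
    nlinarith [norm_nonneg w, (norm_nonneg v).lt_of_ne (Ne.symm hv)]
  rw [hinner, hpyth]
  calc ‖c‖ * ‖v‖ * ‖v‖ ≤ ‖c‖ * ‖v‖ * (N * ‖w‖) := by gcongr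
    _ ≤ N / 2 * (‖w‖ ^ 2 + (‖c‖ * ‖v‖) ^ 2) := by
        nlinarith [mul_nonneg hN (sq_nonneg (‖w‖ - ‖c‖ * ‖v‖))]

theorem norm_mul_norm_le_two_mul_sq_of_forall_norm_inner_le {u v : E} {W : ℝ}
    (h : ∀ t : ℝ, ‖⟪v, u + (t : 𝕜) • v⟫_𝕜‖ ≤ W * ‖u + (t : 𝕜) • v‖ ^ 2) :
    ‖u‖ * ‖v‖ ≤ 2 * W * ‖u‖ ^ 2 := by
  have hinner (t : ℝ) : ⟪v, u + (t : 𝕜) • v⟫_𝕜 = ⟪v, u⟫_𝕜 + ((t * ‖v‖ ^ 2 : ℝ) : 𝕜) := by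
    rw [inner_add_right, inner_smul_right, inner_self_eq_norm_sq_to_K]
    push_cast
    ring
  have key (t : ℝ) : t * ‖v‖ ^ 2 ≤ W * (‖u‖ ^ 2 + t ^ 2 * ‖v‖ ^ 2) := by
    have hdiff : 2 * (t * ‖v‖ ^ 2) ≤
        ‖⟪v, u + (t : 𝕜) • v⟫_𝕜‖ + ‖⟪v, u + ((-t : ℝ) : 𝕜) • v⟫_𝕜‖ := by
      calc 2 * (t * ‖v‖ ^ 2) ≤ ‖((2 * (t * ‖v‖ ^ 2) : ℝ) : 𝕜)‖ := by
            rw [RCLike.norm_ofReal]; exact le_abs_self _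
        _ = ‖⟪v, u + (t : 𝕜) • v⟫_𝕜 - ⟪v, u + ((-t : ℝ) : 𝕜) • v⟫_𝕜‖ := by
            rw [hinner, hinner]; congr 1; push_cast; ring
        _ ≤ _ := norm_sub_le _ _
    have hpar : ‖u + (t : 𝕜) • v‖ ^ 2 + ‖u + ((-t : ℝ) : 𝕜) • v‖ ^ 2
        = 2 * (‖u‖ ^ 2 + t ^ 2 * ‖v‖ ^ 2) := by
      rw [RCLike.ofReal_neg, neg_smul, ← sub_eq_add_neg, parallelogram_law_with_norm 𝕜, norm_smul,
        RCLike.norm_ofReal, mul_pow, sq_abs]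
    calc t * ‖v‖ ^ 2
        ≤ (W * ‖u + (t : 𝕜) • v‖ ^ 2 + W * ‖u + ((-t : ℝ) : 𝕜) • v‖ ^ 2) / 2 := by
          linarith [h t, h (-t)]
      _ = W * (‖u‖ ^ 2 + t ^ 2 * ‖v‖ ^ 2) := by rw [← mul_add, hpar]; ring
  rcases (norm_nonneg v).eq_or_lt with hv | hv
  · have := key 0
    rw [← hv] at this ⊢
    linarith
  · have := key (‖u‖ / ‖v‖)
    rw [show ‖u‖ / ‖v‖ * ‖v‖ ^ 2 = ‖u‖ * ‖v‖ by field_simp,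
      show (‖u‖ / ‖v‖) ^ 2 * ‖v‖ ^ 2 = ‖u‖ ^ 2 by field_simp] at this
    linarith

end InnerProduct

section UnitSphere

variable {𝕜 E F : Type*} [RCLike 𝕜] [AddCommGroup E] [Module 𝕜 E]

theorem exists_norm_apply_eq_one [NormedAddCommGroup F] [NormedSpace 𝕜 F] {S : E →ₗ[𝕜] F}
    (hS : S ≠ 0) : ∃ x, ‖S x‖ = 1 := by
  obtain ⟨x, hx⟩ := DFunLike.ne_iff.mp hS
  refine ⟨(‖S x‖⁻¹ : 𝕜) • x, ?_⟩
  rw [map_smul, norm_smul, norm_inv, RCLike.norm_ofReal, abs_norm,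
    inv_mul_cancel₀ (norm_ne_zero_iff.mpr hx)]

theorem le_sSup_mul_pow_of_homogeneous [SeminormedAddCommGroup F] [NormedSpace 𝕜 F]
    {S : E →ₗ[𝕜] F} {f : E → ℝ} {k : ℕ} (hk : k ≠ 0)
    (hf : ∀ (c : 𝕜) x, f (c • x) = ‖c‖ ^ k * f x)
    (hbdd : BddAbove {r | ∃ x, ‖S x‖ = 1 ∧ r = f x}) {z : E} (hz : ‖S z‖ = 0 → f z ≤ 0) :
    f z ≤ sSup {r | ∃ x, ‖S x‖ = 1 ∧ r = f x} * ‖S z‖ ^ k := by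
  rcases (norm_nonneg (S z)).eq_or_lt with h0 | hpos
  · rw [← h0, zero_pow hk, mul_zero]
    exact hz h0.symm
  have hunit : ‖S ((‖S z‖⁻¹ : 𝕜) • z)‖ = 1 := by
    rw [map_smul, norm_smul, norm_inv, RCLike.norm_ofReal, abs_norm, inv_mul_cancel₀ hpos.ne']
  have hle := le_csSup hbdd ⟨_, hunit, rfl⟩
  rw [hf, norm_inv, RCLike.norm_ofReal, abs_norm, inv_pow, inv_mul_le_iff₀ (by positivity)] at hle
  linarith

end UnitSphere

section OperatorSeminorm

variable {𝕜 E F : Type*} [RCLike 𝕜] [AddCommGroup E] [Module 𝕜 E]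
  [SeminormedAddCommGroup F] [InnerProductSpace 𝕜 F] {S : E →ₗ[𝕜] F} {T : E →ₗ[𝕜] E}

theorem norm_apply_le_sSup_mul (hT : ∃ c, ∀ x, ‖S (T x)‖ ≤ c * ‖S x‖) (z : E) :
    ‖S (T z)‖ ≤ sSup {r | ∃ x, ‖S x‖ = 1 ∧ r = ‖S (T x)‖} * ‖S z‖ := by
  obtain ⟨c, hc⟩ := hT
  have hbdd : BddAbove {r | ∃ x, ‖S x‖ = 1 ∧ r = ‖S (T x)‖} := by
    refine ⟨c, ?_⟩
    rintro _ ⟨x, hx, rfl⟩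
    simpa [hx] using hc x
  simpa using le_sSup_mul_pow_of_homogeneous one_ne_zero
    (fun c x => by rw [map_smul, map_smul, norm_smul, pow_one]) hbdd
    (fun hz => by simpa [hz] using hc z)

theorem norm_inner_apply_le_sSup_mul_sq (hT : ∃ c, ∀ x, ‖S (T x)‖ ≤ c * ‖S x‖) (z : E) :
    ‖⟪S (T z), S z⟫_𝕜‖ ≤ sSup {r | ∃ x, ‖S x‖ = 1 ∧ r = ‖⟪S (T x), S x⟫_𝕜‖} * ‖S z‖ ^ 2 := by
  obtain ⟨c, hc⟩ := hT
  have hbdd : BddAbove {r | ∃ x, ‖S x‖ = 1 ∧ r = ‖⟪S (T x), S x⟫_𝕜‖} := by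
    refine ⟨c, ?_⟩
    rintro _ ⟨x, hx, rfl⟩
    simpa [hx] using (norm_inner_le_norm _ _).trans (by simpa [hx] using hc x)
  refine le_sSup_mul_pow_of_homogeneous two_ne_zero
    (fun c x => by simp only [map_smul, inner_smul_left, inner_smul_right, norm_mul,
      RCLike.norm_conj]; ring) hbdd (fun hz => ?_)
  simpa [hz] using norm_inner_le_norm (𝕜 := 𝕜) (S (T z)) (S z)

theorem norm_inner_apply_le_half_mul_sq (hST : ∀ x, S (T (T x)) = 0) {N : ℝ}
    (hN : ∀ z, ‖S (T z)‖ ≤ N * ‖S z‖) (x : E) :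
    ‖⟪S (T x), S x⟫_𝕜‖ ≤ N / 2 * ‖S x‖ ^ 2 :=
  norm_inner_le_half_mul_sq_of_forall_norm_le fun μ => by simpa [hST] using hN (x + μ • T x)

theorem norm_mul_norm_apply_le_two_mul_sq (hST : ∀ x, S (T (T x)) = 0) {W : ℝ}
    (hW : ∀ z, ‖⟪S (T z), S z⟫_𝕜‖ ≤ W * ‖S z‖ ^ 2) (x : E) :
    ‖S x‖ * ‖S (T x)‖ ≤ 2 * W * ‖S x‖ ^ 2 :=
  norm_mul_norm_le_two_mul_sq_of_forall_norm_inner_le fun t => by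
    simpa [hST] using hW (x + (t : 𝕜) • T x)

end OperatorSeminorm

theorem inner_star_mul_self_apply {𝕜 E : Type*} [RCLike 𝕜] [NormedAddCommGroup E]
    [InnerProductSpace 𝕜 E] [CompleteSpace E] (S : E →L[𝕜] E) (x y : E) :
    ⟪(star S * S) x, y⟫_𝕜 = ⟪S x, S y⟫_𝕜 := by
  rw [← ContinuousLinearMap.adjoint_inner_left, ← ContinuousLinearMap.star_eq_adjoint]
  rfl

theorem anorm_star_mul_self (S : H →L[ℂ] H) (x : H) : anorm (star S * S) x = ‖S x‖ := by
  rw [anorm, inner_star_mul_self_apply]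
  exact (congrArg Real.sqrt (inner_self_eq_norm_sq (𝕜 := ℂ) (S x))).trans
    (Real.sqrt_sq (norm_nonneg _))

theorem apply_apply_eq_zero_of_star_mul_self_comp_sq_eq_zero {S T : H →L[ℂ] H}
    (h : star S * S ∘L T ^ 2 = 0) (x : H) : S (T (T x)) = 0 := by
  have hx : (star S * S) (T (T x)) = 0 := by
    simpa [sq] using congr($h x)
  have hS := inner_star_mul_self_apply S (T (T x)) (T (T x))
  rw [hx, inner_zero_left] at hS
  exact inner_self_eq_zero.mp hS.symm

theorem stmt_15 (A T : H →L[ℂ] H) (hA : A.IsPositive) (hA0 : A ≠ 0)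
    (hT : ABounded A T) (h2 : A ∘L (T ^ 2) = 0) :
    wA A T = (1 / 2) * opAnorm A T := by
  obtain ⟨S, rfl⟩ := CStarAlgebra.nonneg_iff_eq_star_mul_self.mp
    ((ContinuousLinearMap.nonneg_iff_isPositive A).mpr hA)
  have hS0 : S ≠ 0 := by
    rintro rfl
    simp at hA0
  obtain ⟨e, he⟩ := exists_norm_apply_eq_one (ContinuousLinearMap.coe_injective.ne hS0)
  have hST := apply_apply_eq_zero_of_star_mul_self_comp_sq_eq_zero h2
  simp only [ABounded, anorm_star_mul_self] at hT
  obtain ⟨c, -, hc⟩ := hT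
  simp only [wA, opAnorm, anorm_star_mul_self, inner_star_mul_self_apply]
  rw [one_div_mul_eq_div]
  apply le_antisymm
  · refine csSup_le ⟨_, e, he, rfl⟩ ?_
    rintro _ ⟨x, hx, rfl⟩
    simpa [hx] using norm_inner_apply_le_half_mul_sq (S := (S : H →ₗ[ℂ] H)) hST
      (norm_apply_le_sSup_mul ⟨c, hc⟩) x
  · suffices h : sSup {r | ∃ x, ‖S x‖ = 1 ∧ r = ‖S (T x)‖} ≤
        2 * sSup {r | ∃ x, ‖S x‖ = 1 ∧ r = ‖⟪S (T x), S x⟫_ℂ‖} by linarith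
    refine csSup_le ⟨_, e, he, rfl⟩ ?_
    rintro _ ⟨x, hx, rfl⟩
    simpa [hx] using norm_mul_norm_apply_le_two_mul_sq (S := (S : H →ₗ[ℂ] H)) hST
      (norm_inner_apply_le_sSup_mul_sq ⟨c, hc⟩) x
end

section
/- If T ∈ B_A(H) is A-hyponormal, i.e., ‖Tx‖_A ≥ ‖T^♯ x‖_A for all x ∈ H, then T is A-paranormal, i.e., ‖Tx‖_A² ≤ ‖T²x‖_A for all x with ‖x‖_A = 1. -/
open Filter

variable {H : Type*} [NormedAddCommGroup H] [InnerProductSpace ℂ H] [CompleteSpace H]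

/-! With `S` the `A`-adjoint of `T`, `‖Tx‖_A² = Re ⟨x, STx⟩_A ≤ ‖x‖_A ‖STx‖_A` by Cauchy–Schwarz for
the semi-inner product `⟨Ax, y⟩`, and hyponormality applied to `Tx` bounds `‖STx‖_A` by `‖T²x‖_A`. -/

section

variable {E : Type*} [NormedAddCommGroup E] [InnerProductSpace ℂ E] {A : E →L[ℂ] E}

/-- The semi-inner product `⟨Ax, y⟩`; its core norm is definitionally `anorm A`. -/
noncomputable abbrev ContinuousLinearMap.IsPositive.preInnerProductSpaceCore (hA : A.IsPositive) :
    PreInnerProductSpace.Core ℂ E where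
  inner x y := inner ℂ (A x) y
  conj_inner_symm x y := by rw [inner_conj_symm, hA.inner_left_eq_inner_right]
  re_inner_nonneg := hA.re_inner_nonneg_left
  add_left x y z := by simp only [map_add, inner_add_left]
  smul_left x y r := by simp only [map_smul, inner_smul_left]

theorem anorm_sq (hA : A.IsPositive) (x : E) : anorm A x ^ 2 = (inner ℂ (A x) x).re :=
  Real.sq_sqrt (hA.re_inner_nonneg_left x)

theorem norm_inner_apply_le_anorm_mul_anorm (hA : A.IsPositive) (x y : E) :
    ‖inner ℂ (A x) y‖ ≤ anorm A x * anorm A y :=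
  @InnerProductSpace.Core.norm_inner_le_norm ℂ E _ _ _ hA.preInnerProductSpaceCore x y

theorem anorm_apply_sq_le_of_isAdjoint (hA : A.IsPositive) {T S : E →L[ℂ] E}
    (hadj : ∀ x y, inner ℂ (A (T x)) y = inner ℂ (A x) (S y)) (x : E) :
    anorm A (T x) ^ 2 ≤ anorm A x * anorm A (S (T x)) :=
  calc anorm A (T x) ^ 2 = (inner ℂ (A x) (S (T x))).re := by rw [anorm_sq hA, hadj]
    _ ≤ ‖inner ℂ (A x) (S (T x))‖ := Complex.re_le_norm _
    _ ≤ anorm A x * anorm A (S (T x)) := norm_inner_apply_le_anorm_mul_anorm hA x _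

end

theorem stmt_16_general (A T S : H →L[ℂ] H) (hA : A.IsPositive)
    (hadj : ∀ x y : H, (inner ℂ (A (T x)) y : ℂ) = (inner ℂ (A x) (S y) : ℂ))
    (hhyp : ∀ x : H, anorm A (S x) ≤ anorm A (T x)) :
    ∀ x : H, anorm A x = 1 → (anorm A (T x)) ^ 2 ≤ anorm A ((T ^ 2) x) := by
  intro x hx
  calc anorm A (T x) ^ 2 ≤ anorm A x * anorm A (S (T x)) := anorm_apply_sq_le_of_isAdjoint hA hadj x
    _ ≤ anorm A ((T ^ 2) x) := by rw [hx, one_mul, sq]; exact hhyp (T x)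

theorem stmt_16 (A T S : H →L[ℂ] H) (hA : A.IsPositive) (hA0 : A ≠ 0)
    (hadj : ∀ x y : H, (inner ℂ (A (T x)) y : ℂ) = (inner ℂ (A x) (S y) : ℂ))
    (hhyp : ∀ x : H, anorm A (S x) ≤ anorm A (T x)) :
    ∀ x : H, anorm A x = 1 → (anorm A (T x)) ^ 2 ≤ anorm A ((T ^ 2) x) :=
  stmt_16_general A T S hA hadj hhyp
end
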